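/- Let (F_n) be a sequence of continuous quasi-linear forms on C_b(Y), Y a Polish space, which is asymptotically tight (i.e., limsup_n ρ(F_n) < +∞ and inf over compact K of limsup_n F_n(Y∖K) = −∞). If F is such that limsup_n F_n(K) ≤ F(K) for all compact K ⊂ Y, F is the extension of a continuous max-plus linear form with density bounded below, and lim_n ρ(F_n) = 0, then limsup_n F_n(C) ≤ F(C) for all closed C ⊂ Y. -/

import Mathlib

/-!
For every compact `K`, `1_C ≤ 1_{C ∩ K} ∨ 1_{Kᶜ}`, so quasi-linearity with `ρ(F_n) → 0` gives
`limsup F_n(C) ≤ max (limsup F_n(C ∩ K)) (limsup F_n(Kᶜ)) ≤ max F(C) (limsup F_n(Kᶜ))`, as `C ∩ K`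
is compact. Tightness makes the second term vanish in the infimum over `K`.
-/

open Filter

section MaxPlusIndicator

variable {Y : Type*}

open Classical in
noncomputable def maxPlusIndicator (A : Set Y) : Y → EReal := fun y => if y ∈ A then 0 else ⊥

theorem maxPlusIndicator_mono : Monotone (maxPlusIndicator (Y := Y)) := by
  intro A B hAB y
  by_cases hy : y ∈ A
  · simp [maxPlusIndicator, hy, hAB hy]
  · simp [maxPlusIndicator, hy]

theorem maxPlusIndicator_le_inter_sup_compl (C K : Set Y) :
    maxPlusIndicator C ≤ maxPlusIndicator (C ∩ K) ⊔ maxPlusIndicator Kᶜ := by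
  intro y
  by_cases hyK : y ∈ K <;> by_cases hyC : y ∈ C <;> simp [maxPlusIndicator, hyK, hyC]

end MaxPlusIndicator

theorem monotone_iSup_add {Y : Type*} (g : Y → EReal) :
    Monotone fun φ : Y → EReal => ⨆ y, φ y + g y :=
  fun _ _ h => iSup_mono fun y => add_le_add_left (h y) _

theorem limsup_le_max_of_le_sup {ι X : Type*} {l : Filter ι} [l.NeBot] [Preorder X] [Max X]
    {Fn : ι → X → EReal} {rho : ι → EReal} (hmono : ∀ n, Monotone (Fn n))
    (hql : ∀ n φ ψ, Fn n (φ ⊔ ψ) ≤ rho n + max (Fn n φ) (Fn n ψ))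
    (hrho : Tendsto rho l (nhds 0)) {χ φ ψ : X} (hχ : χ ≤ φ ⊔ ψ) :
    limsup (fun n => Fn n χ) l ≤ max (limsup (fun n => Fn n φ) l) (limsup (fun n => Fn n ψ) l) := by
  have hrho_limsup : limsup rho l = 0 := hrho.limsup_eq
  calc limsup (fun n => Fn n χ) l
      ≤ limsup (rho + fun n => max (Fn n φ) (Fn n ψ)) l :=
        limsup_le_limsup (Eventually.of_forall fun n => (hmono n hχ).trans (hql n φ ψ))
    _ ≤ limsup rho l + limsup (fun n => max (Fn n φ) (Fn n ψ)) l :=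
        EReal.limsup_add_le (by simp [hrho_limsup]) (by simp [hrho_limsup])
    _ = max (limsup (fun n => Fn n φ) l) (limsup (fun n => Fn n ψ) l) := by
        rw [hrho_limsup, zero_add, limsup_max]

open Filter Classical in
theorem limsup_closed_of_limsup_compact_general {Y : Type*} [TopologicalSpace Y]
    (Fn : ℕ → (Y → EReal) → EReal) (rho : ℕ → EReal)
    (f : Y → EReal) :
    let ind : Set Y → Y → EReal := fun A y => if y ∈ A then (0 : EReal) else ⊥
    let F : (Y → EReal) → EReal := fun φ => ⨆ y, φ y + (-(f y))
    -- each `F_n` is isotone and quasi-linear with constant `ρ n`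
    (∀ n, Monotone (Fn n)) →
    (∀ n (φ ψ : Y → EReal), Fn n (φ ⊔ ψ) ≤ rho n + max (Fn n φ) (Fn n ψ)) →
    (atTop.limsup fun n => rho n) < ⊤ →
    Tendsto (fun n => rho n) atTop (nhds (0 : EReal)) →
    -- asymptotic tightness
    (⨅ K ∈ {K : Set Y | IsCompact K}, atTop.limsup fun n => Fn n (ind Kᶜ)) = ⊥ →
    -- compact upper bound
    (∀ K : Set Y, IsCompact K → (atTop.limsup fun n => Fn n (ind K)) ≤ F (ind K)) →
    ∀ C : Set Y, IsClosed C → (atTop.limsup fun n => Fn n (ind C)) ≤ F (ind C) := by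
  intro ind F hmono hql _ hrho htight hcomp C hC
  have le_max_of_isCompact : ∀ K ∈ {K : Set Y | IsCompact K},
      (atTop.limsup fun n => Fn n (ind C)) ≤ max (F (ind C)) (atTop.limsup fun n => Fn n (ind Kᶜ)) :=
    fun K hK => (limsup_le_max_of_le_sup hmono hql hrho
      (maxPlusIndicator_le_inter_sup_compl C K)).trans <| max_le_max_right _ <|
        (hcomp _ (hK.inter_left hC)).trans <|
          monotone_iSup_add _ (maxPlusIndicator_mono Set.inter_subset_left)
  calc (atTop.limsup fun n => Fn n (ind C))
      ≤ ⨅ K ∈ {K : Set Y | IsCompact K}, max (F (ind C)) (atTop.limsup fun n => Fn n (ind Kᶜ)) :=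
        le_iInf₂ le_max_of_isCompact
    _ = F (ind C) := by rw [← sup_iInf₂_eq, htight, sup_bot_eq]

open Filter Classical in
/-- Let `(F_n)` be (extensions of) continuous quasi-linear forms on a Polish
space `Y` which are asymptotically tight, with `ρ(F_n) → 0` and
`limsup ρ(F_n) < +∞`. If `F` is the extension of a continuous max-plus linear
form with density `f` bounded below, and `limsup F_n(K) ≤ F(K)` for all
compact `K`, then `limsup F_n(C) ≤ F(C)` for all closed `C`. -/
theorem limsup_closed_of_limsup_compact {Y : Type*} [TopologicalSpace Y]
    [PolishSpace Y]
    (Fn : ℕ → (Y → EReal) → EReal) (rho : ℕ → EReal)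
    (f : Y → EReal) (c : ℝ) (hfb : ∀ y, (c : EReal) ≤ f y) :
    let ind : Set Y → Y → EReal := fun A y => if y ∈ A then (0 : EReal) else ⊥
    let F : (Y → EReal) → EReal := fun φ => ⨆ y, φ y + (-(f y))
    -- each `F_n` is isotone and quasi-linear with constant `ρ n`
    (∀ n, Monotone (Fn n)) →
    (∀ n (φ ψ : Y → EReal), Fn n (φ ⊔ ψ) ≤ rho n + max (Fn n φ) (Fn n ψ)) →
    (atTop.limsup fun n => rho n) < ⊤ →
    Tendsto (fun n => rho n) atTop (nhds (0 : EReal)) →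
    -- asymptotic tightness
    (⨅ K ∈ {K : Set Y | IsCompact K}, atTop.limsup fun n => Fn n (ind Kᶜ)) = ⊥ →
    -- compact upper bound
    (∀ K : Set Y, IsCompact K → (atTop.limsup fun n => Fn n (ind K)) ≤ F (ind K)) →
    ∀ C : Set Y, IsClosed C → (atTop.limsup fun n => Fn n (ind C)) ≤ F (ind C) :=
  limsup_closed_of_limsup_compact_general Fn rho f
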